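/- arXiv:1701.04160 — 3 statements merged into one kernel-verified Lean document; each statement's English description precedes it below -/
import Mathlib

section
/- Let P be the probability measure with density (3/2)^n on J_n = [1 - 1/3^(n-1), 1 - 2/3^n] for n ≥ 1, and let c_k = 1 - 1/(2·3^k). Then ∑_{j=k+1}^∞ ∫_{J_j} (x - c_k)^2 dP = (25/204)·18^(-k). -/
open MeasureTheory Set

/-- The interval `J n = [1 - 1/3^(n-1), 1 - 2/3^n]`. -/
noncomputable def J (n : ℕ) : Set ℝ := Set.Icc (1 - 1 / 3 ^ (n - 1)) (1 - 2 / 3 ^ n)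

/-- The piecewise constant density: `(3/2)^n` on `J n` for `n ≥ 1`, `0` elsewhere. -/
noncomputable def f (x : ℝ) : ℝ :=
  ∑' n : ℕ, Set.indicator (J (n + 1)) (fun _ => ((3 : ℝ) / 2) ^ (n + 1)) x

/-- The piecewise uniform probability measure on `ℝ` with density `f`. -/
noncomputable def P : Measure ℝ :=
  MeasureTheory.volume.withDensity (fun x => ENNReal.ofReal (f x))

lemma J_disj {p q : ℕ} {x : ℝ} (hpq : p < q) (hp : x ∈ J (p+1)) (hq : x ∈ J (q+1)) : False := by
  simp only [J, Nat.add_sub_cancel, mem_Icc] at hp hq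
  have h3 : (3:ℝ)^(p+1) ≤ 3^q := pow_le_pow_right₀ (by norm_num) hpq
  have p2 : (0:ℝ) < (3:ℝ)^(p+1) := by positivity
  have p1 : (0:ℝ) < (3:ℝ)^q := by positivity
  have h1 : (1:ℝ)/3^q ≤ 1/3^(p+1) := one_div_le_one_div_of_le p2 h3
  have hlt : 2/(3:ℝ)^(p+1) ≤ 1/3^q := by linarith [hp.2, hq.1]
  have h2 : 2/(3:ℝ)^(p+1) ≤ 1/3^(p+1) := le_trans hlt h1
  rw [div_le_div_iff₀ p2 p2] at h2
  nlinarith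

lemma f_eq {n : ℕ} {x : ℝ} (hx : x ∈ J (n+1)) : f x = ((3:ℝ)/2)^(n+1) := by
  rw [f, tsum_eq_single n]
  · exact indicator_of_mem hx _
  · intro m hm
    refine indicator_of_notMem (fun hxm => ?_) _
    rcases lt_or_gt_of_ne hm with h | h
    · exact J_disj h hxm hx
    · exact J_disj h hx hxm

lemma P_restrict (n : ℕ) :
    P.restrict (J (n+1)) = ENNReal.ofReal (((3:ℝ)/2)^(n+1)) • volume.restrict (J (n+1)) := by
  have hs : MeasurableSet (J (n+1)) := measurableSet_Icc
  rw [P, restrict_withDensity hs,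
    withDensity_congr_ae (g := fun _ => ENNReal.ofReal (((3:ℝ)/2)^(n+1)))
      ((ae_restrict_iff' hs).mpr (ae_of_all _ fun x hx => by rw [f_eq hx])),
    withDensity_const]

lemma int_sq (a b c : ℝ) (h : a ≤ b) :
    ∫ x in Icc a b, (x - c)^2 = ((b-c)^3 - (a-c)^3)/3 := by
  rw [integral_Icc_eq_integral_Ioc, ← intervalIntegral.integral_of_le h]
  rw [show (fun x => (x - c)^2) = (fun x => ((fun y => y^2) (x - c))) from rfl]
  rw [intervalIntegral.integral_comp_sub_right (fun y => y^2) c, integral_pow]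
  norm_num

lemma term_eq (k j : ℕ) :
    ((3:ℝ)/2)^(k+j+1) * (((1 - 2/3^(k+j+1) - (1 - 1/(2*3^k)))^3 - (1 - 1/3^(k+j) - (1 - 1/(2*3^k)))^3)/3)
    = (1/18^k) * ((1/8)*(1/2)^j - (5/12)*(1/6)^j + (19/54)*(1/18)^j) := by
  have h2k : ((2:ℝ))^k ≠ 0 := by positivity
  have h2j : ((2:ℝ))^j ≠ 0 := by positivity
  have h3k : ((3:ℝ))^k ≠ 0 := by positivity
  have h3j : ((3:ℝ))^j ≠ 0 := by positivity
  have e6 : (6:ℝ)^j = 2^j * 3^j := by rw [show (6:ℝ) = 2*3 by norm_num, mul_pow]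
  have e18k : (18:ℝ)^k = 2^k * (3^k * 3^k) := by
    rw [show (18:ℝ) = 2*(3*3) by norm_num, mul_pow, mul_pow]
  have e18j : (18:ℝ)^j = 2^j * (3^j * 3^j) := by
    rw [show (18:ℝ) = 2*(3*3) by norm_num, mul_pow, mul_pow]
  simp only [pow_add, pow_one, div_pow, one_pow, pow_succ, e6, e18k, e18j]
  field_simp
  ring

theorem stmt_5 (k : ℕ) (hk : 1 ≤ k) :
    (∑' j : ℕ, ∫ x in J (k + 1 + j), (x - (1 - 1 / (2 * 3 ^ k))) ^ 2 ∂P) =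
      (25 / 204) * (1 / 18 ^ k) := by
  have hterm : ∀ j : ℕ, (∫ x in J (k + 1 + j), (x - (1 - 1 / (2 * 3 ^ k))) ^ 2 ∂P)
      = (1/18^k) * ((1/8)*(1/2:ℝ)^j - (5/12)*(1/6:ℝ)^j + (19/54)*(1/18:ℝ)^j) := by
    intro j
    have hm : k + 1 + j = (k+j) + 1 := by omega
    rw [hm, P_restrict (k+j), integral_smul_measure,
      ENNReal.toReal_ofReal (by positivity), smul_eq_mul]
    have hJ : J (k+j+1) = Icc (1 - 1/3^(k+j)) (1 - 2/3^(k+j+1)) := by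
      simp [J]
    have hle : (1:ℝ) - 1/3^(k+j) ≤ 1 - 2/3^(k+j+1) := by
      have h1 : (2:ℝ)/3^(k+j+1) ≤ 1/3^(k+j) := by
        rw [div_le_div_iff₀ (by positivity) (by positivity), pow_succ]
        nlinarith [pow_pos (show (0:ℝ) < 3 by norm_num) (k+j)]
      linarith
    rw [hJ, int_sq _ _ _ hle]
    exact term_eq k j
  rw [tsum_congr hterm, tsum_mul_left]
  have s1 : Summable (fun j:ℕ => ((1:ℝ)/8)*(1/2)^j) :=
    (summable_geometric_of_lt_one (by norm_num) (by norm_num)).mul_left _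
  have s2 : Summable (fun j:ℕ => ((5:ℝ)/12)*(1/6)^j) :=
    (summable_geometric_of_lt_one (by norm_num) (by norm_num)).mul_left _
  have s3 : Summable (fun j:ℕ => ((19:ℝ)/54)*(1/18)^j) :=
    (summable_geometric_of_lt_one (by norm_num) (by norm_num)).mul_left _
  rw [Summable.tsum_add (s1.sub s2) s3, Summable.tsum_sub s1 s2, tsum_mul_left, tsum_mul_left, tsum_mul_left,
    tsum_geometric_of_lt_one (by norm_num) (by norm_num),
    tsum_geometric_of_lt_one (by norm_num) (by norm_num),
    tsum_geometric_of_lt_one (by norm_num) (by norm_num)]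
  norm_num
  ring
end

section
/- Let P be the probability measure on ℝ with density (3/2)^n on J_n = [1 - 1/3^(n-1), 1 - 2/3^n] for n ≥ 1. Then ∫ min((x - 1/6)^2, (x - 5/6)^2) dP = 7/612. Moreover, for every two-point set {a₁, a₂} ⊂ ℝ, ∫ min((x - a₁)^2, (x - a₂)^2) dP ≥ 7/612, so {1/6, 5/6} is an optimal set of two-means with quantization error V₂ = 7/612. -/
open MeasureTheory Set

/-!
`P` is self-similar: it is `3/2` times Lebesgue measure on `[0, 1/3]` plus half the image of `P`
under `x ↦ 2/3 + x/3`. Solving the resulting linear equations gives `∫ x dP = 1/2` and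
`∫ x² dP = 19/51`, and the error of `{1/6, 5/6}` is `1/216 + (1/18) · Var P = 7/612`.

For the lower bound let `m` be the midpoint of `a₁ ≤ a₂`, `p = P (-∞, m]` and `M = ∫_{x ≤ m} x dP`.
The error is a quadratic in `(a₁, a₂)` whose minimum is `19/51 - (M²/p + (1/2 - M)²/(1 - p))`, so it
suffices that `M²/p + (1/2 - M)²/(1 - p) ≤ 13/36`. For `m ≤ 1/3` one has `M = p²/3` with `p ≤ 1/2`;
for `m ≥ 1/3` the support of `P` in `[0, 1/3] ∪ [2/3, 1]` gives `1/2 ≤ p` and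
`max (2p/3 - 1/4) (p - 1/2) ≤ M ≤ p/2`, and both regions are handled by elementary inequalities.
-/

lemma J_succ (n : ℕ) : J (n + 1) = Icc (1 - 1 / 3 ^ n) (1 - 2 / 3 ^ (n + 1)) := rfl

lemma J_one : J 1 = Icc 0 (1 / 3) := by norm_num [J]

lemma J_lower_le_upper (n : ℕ) : (1 : ℝ) - 1 / 3 ^ n ≤ 1 - 2 / 3 ^ (n + 1) := by
  have : (1 : ℝ) ≤ 3 ^ n := one_le_pow₀ (by norm_num)
  rw [pow_succ]; field_simp; linarith

lemma J_succ_succ_subset (n : ℕ) : J (n + 2) ⊆ Icc (2 / 3) 1 := by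
  rw [J_succ]
  refine Icc_subset_Icc ?_ (by linarith [show (0 : ℝ) < 2 / 3 ^ (n + 2) by positivity])
  have : (1 : ℝ) / 3 ^ (n + 1) ≤ 1 / 3 :=
    div_le_div_of_nonneg_left zero_le_one (by norm_num) (le_self_pow₀ (by norm_num) (by omega))
  linarith

lemma J_subset (n : ℕ) : J (n + 1) ⊆ Icc 0 (1 / 3) ∪ Icc (2 / 3) 1 := by
  rcases n with _ | n
  · exact J_one ▸ subset_union_left
  · exact (J_succ_succ_subset n).trans subset_union_right

lemma disjoint_J {k n : ℕ} (h : k ≠ n) : Disjoint (J (k + 1)) (J (n + 1)) := by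
  wlog hkn : k < n generalizing k n
  · exact (this h.symm (by omega)).symm
  have h1 : (1 : ℝ) / 3 ^ n ≤ 1 / 3 ^ (k + 1) := by gcongr; norm_num; omega
  have h2 : (1 : ℝ) / 3 ^ (k + 1) < 2 / 3 ^ (k + 1) := by gcongr; norm_num
  rw [J_succ, J_succ]
  exact disjoint_left.2 fun x hk hn => by linarith [hk.2, hn.1]

lemma volume_J (n : ℕ) : volume (J (n + 1)) = ENNReal.ofReal ((1 / 3) ^ (n + 1)) := by
  rw [J_succ, Real.volume_Icc]
  congr 1
  rw [div_pow, pow_succ]; field_simp; ring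

lemma ofReal_f (x : ℝ) :
    ENNReal.ofReal (f x) =
      ∑' n, (J (n + 1)).indicator (fun _ => ENNReal.ofReal ((3 / 2) ^ (n + 1))) x := by
  by_cases hx : ∃ n, x ∈ J (n + 1)
  · obtain ⟨n, hn⟩ := hx
    have hout : ∀ k ≠ n, x ∉ J (k + 1) := fun k hk hk' => (disjoint_J hk).notMem_of_mem_left hk' hn
    rw [f, tsum_eq_single n (fun k hk => indicator_of_notMem (hout k hk) _),
      tsum_eq_single n (fun k hk => indicator_of_notMem (hout k hk) _),
      indicator_of_mem hn, indicator_of_mem hn]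
  · push Not at hx
    simp [f, indicator_of_notMem (hx _)]

lemma P_eq_sum :
    P = Measure.sum fun n => ENNReal.ofReal ((3 / 2) ^ (n + 1)) • volume.restrict (J (n + 1)) := by
  have hJ (n : ℕ) : MeasurableSet (J n) := measurableSet_Icc
  have : (fun x => ENNReal.ofReal (f x)) =
      ∑' n, (J (n + 1)).indicator (fun _ => ENNReal.ofReal ((3 / 2) ^ (n + 1))) := by
    ext x; rw [ofReal_f, ENNReal.tsum_apply]
  rw [P, this, withDensity_tsum fun n => measurable_const.indicator (hJ _)]
  simp_rw [withDensity_indicator (hJ _), withDensity_const]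

instance : IsProbabilityMeasure P := by
  constructor
  have hterm (n : ℕ) : ENNReal.ofReal ((3 / 2) ^ (n + 1)) * volume (J (n + 1)) = 2⁻¹ * 2⁻¹ ^ n := by
    rw [volume_J, ← ENNReal.ofReal_mul (by positivity), ← mul_pow, ← pow_succ',
      ENNReal.ofReal_pow (by norm_num), show (3 / 2 * (1 / 3) : ℝ) = 2⁻¹ by norm_num,
      ENNReal.ofReal_inv_of_pos two_pos, ENNReal.ofReal_ofNat]
  simp only [P_eq_sum, Measure.sum_apply_of_countable, Measure.smul_apply,
    Measure.restrict_apply_univ, smul_eq_mul, hterm, ENNReal.tsum_mul_left, ENNReal.tsum_geometric,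
    ENNReal.one_sub_inv_two, inv_inv]
  exact ENNReal.inv_mul_cancel (by norm_num) (by norm_num)

lemma ae_mem_P : ∀ᵐ x ∂P, x ∈ Icc 0 (1 / 3) ∪ Icc (2 / 3) 1 := by
  rw [P_eq_sum, Measure.ae_sum_iff]
  exact fun n =>
    Measure.ae_smul_measure (ae_restrict_of_forall_mem measurableSet_Icc (J_subset n)) _

lemma ae_mem_Icc_P : ∀ᵐ x ∂P, x ∈ Icc (0 : ℝ) 1 := by
  filter_upwards [ae_mem_P] with x hx
  rcases hx with hx | hx
  · exact ⟨hx.1, hx.2.trans (by norm_num)⟩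
  · exact ⟨(by norm_num : (0 : ℝ) ≤ 2 / 3).trans hx.1, hx.2⟩

lemma Continuous.integrable_P {g : ℝ → ℝ} (hg : Continuous g) : Integrable g P := by
  obtain ⟨C, hC⟩ := isCompact_Icc.exists_bound_of_continuousOn (hg.continuousOn (s := Icc 0 1))
  refine Integrable.mono' (integrable_const C) hg.aestronglyMeasurable ?_
  filter_upwards [ae_mem_Icc_P] with x hx using hC x hx

lemma hasSum_integral_P {g : ℝ → ℝ} (hg : Continuous g) :
    HasSum (fun n => (3 / 2) ^ (n + 1) * ∫ x in J (n + 1), g x) (∫ x, g x ∂P) := by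
  have h := hasSum_integral_measure (P_eq_sum ▸ hg.integrable_P)
  rw [← P_eq_sum] at h
  refine h.congr_fun fun n => ?_
  rw [integral_smul_measure, ENNReal.toReal_ofReal (by positivity), smul_eq_mul]

lemma setIntegral_Icc_eq_intervalIntegral {a b : ℝ} (h : a ≤ b) (g : ℝ → ℝ) :
    ∫ x in Icc a b, g x = ∫ x in a..b, g x := by
  rw [integral_Icc_eq_integral_Ioc, intervalIntegral.integral_of_le h]

theorem integral_P_self_similar {g : ℝ → ℝ} (hg : Continuous g) :
    ∫ x, g x ∂P = 3 / 2 * (∫ x in Icc 0 (1 / 3), g x) + 1 / 2 * ∫ x, g (2 / 3 + x / 3) ∂P := by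
  have hshift (n : ℕ) : (3 / 2 : ℝ) ^ (n + 1 + 1) * ∫ x in J (n + 1 + 1), g x =
      1 / 2 * ((3 / 2) ^ (n + 1) * ∫ x in J (n + 1), g (2 / 3 + x / 3)) := by
    rw [J_succ, J_succ, setIntegral_Icc_eq_intervalIntegral (J_lower_le_upper _),
      setIntegral_Icc_eq_intervalIntegral (J_lower_le_upper _),
      intervalIntegral.integral_comp_add_div _ three_ne_zero]
    have e1 : (2 / 3 : ℝ) + (1 - 1 / 3 ^ n) / 3 = 1 - 1 / 3 ^ (n + 1) := by
      rw [pow_succ]; field_simp; ring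
    have e2 : (2 / 3 : ℝ) + (1 - 2 / 3 ^ (n + 1)) / 3 = 1 - 2 / 3 ^ (n + 1 + 1) := by
      rw [pow_succ _ (n + 1)]; field_simp; ring
    rw [e1, e2, smul_eq_mul, pow_succ _ (n + 1)]
    ring
  have h := (hasSum_nat_add_iff (f := fun n => (3 / 2) ^ (n + 1) * ∫ x in J (n + 1), g x) 1).mp
    (((hasSum_integral_P (g := fun x => g (2 / 3 + x / 3)) (by fun_prop)).mul_left
      (1 / 2)).congr_fun hshift)
  rw [(hasSum_integral_P hg).unique h, Finset.sum_range_one, zero_add, J_one]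
  ring

lemma integral_sq_sub {μ : Measure ℝ} [IsProbabilityMeasure μ] (hx : Integrable (fun x => x) μ)
    (hx2 : Integrable (fun x => x ^ 2) μ) (c : ℝ) :
    ∫ x, (x - c) ^ 2 ∂μ = ∫ x, x ^ 2 ∂μ - 2 * c * ∫ x, x ∂μ + c ^ 2 := by
  have : (fun x => (x - c) ^ 2) = fun x => x ^ 2 - 2 * c * x + c ^ 2 := by ext; ring
  have hsub : Integrable (fun x => x ^ 2 - 2 * c * x) μ := hx2.sub (hx.const_mul _)
  rw [this, integral_add hsub (integrable_const _), integral_sub hx2 (hx.const_mul _),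
    integral_const_mul, integral_const]
  simp

lemma integrable_id_P : Integrable (fun x : ℝ => x) P :=
  Continuous.integrable_P (g := fun x => x) continuous_id'

lemma integrable_sq_P : Integrable (fun x : ℝ => x ^ 2) P :=
  Continuous.integrable_P (by fun_prop)

lemma integral_id_P : ∫ x, x ∂P = 1 / 2 := by
  have h := integral_P_self_similar (g := fun x => x) continuous_id
  rw [setIntegral_Icc_eq_intervalIntegral (by norm_num), integral_id,
    integral_add (integrable_const _) (integrable_id_P.div_const 3)] at h
  simp only [integral_div, integral_const, probReal_univ, one_smul] at h
  linarith

lemma integral_sq_P : ∫ x, x ^ 2 ∂P = 19 / 51 := by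
  have h := integral_P_self_similar (g := fun x => x ^ 2) (by fun_prop)
  have hS : (fun x : ℝ => (2 / 3 + x / 3) ^ 2) = fun x => (x - -2) ^ 2 / 9 := by ext; ring
  rw [setIntegral_Icc_eq_intervalIntegral (by norm_num), integral_pow, hS, integral_div,
    integral_sq_sub integrable_id_P integrable_sq_P, integral_id_P] at h
  norm_num at h
  linarith

lemma integral_sq_sub_P (c : ℝ) : ∫ x, (x - c) ^ 2 ∂P = 19 / 51 - c + c ^ 2 := by
  rw [integral_sq_sub integrable_id_P integrable_sq_P, integral_sq_P, integral_id_P]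
  ring

lemma integral_min_sq_P_sixths : ∫ x, min ((x - 1 / 6) ^ 2) ((x - 5 / 6) ^ 2) ∂P = 7 / 612 := by
  have hleft : ∫ x in Icc (0 : ℝ) (1 / 3), min ((x - 1 / 6) ^ 2) ((x - 5 / 6) ^ 2) = 1 / 324 := by
    rw [setIntegral_congr_fun measurableSet_Icc fun x hx => min_eq_left (by nlinarith [hx.1, hx.2]),
      setIntegral_Icc_eq_intervalIntegral (by norm_num),
      intervalIntegral.integral_comp_sub_right (fun x => x ^ 2), integral_pow]
    norm_num
  have hright : ∫ x, min ((2 / 3 + x / 3 - 1 / 6) ^ 2) ((2 / 3 + x / 3 - 5 / 6) ^ 2) ∂P =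
      ∫ x, (x - 1 / 2) ^ 2 / 9 ∂P := by
    refine integral_congr_ae ?_
    filter_upwards [ae_mem_Icc_P] with x hx
    rw [min_eq_right (by nlinarith [hx.1])]
    ring
  rw [integral_P_self_similar (by fun_prop), hleft, hright, integral_div, integral_sq_sub_P]
  norm_num

theorem integral_min_sq_sub_sq {μ : Measure ℝ} [IsFiniteMeasure μ] (hx : Integrable (fun x => x) μ)
    (hx2 : Integrable (fun x => x ^ 2) μ) {a₁ a₂ : ℝ} (h : a₁ ≤ a₂) :
    ∫ x, min ((x - a₁) ^ 2) ((x - a₂) ^ 2) ∂μ = ∫ x, (x - a₂) ^ 2 ∂μ +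
      (2 * (a₂ - a₁) * ∫ x in Iic ((a₁ + a₂) / 2), x ∂μ +
        (a₁ ^ 2 - a₂ ^ 2) * μ.real (Iic ((a₁ + a₂) / 2))) := by
  set m := (a₁ + a₂) / 2 with hm
  have hpt : (fun x => min ((x - a₁) ^ 2) ((x - a₂) ^ 2)) = fun x =>
      (x - a₂) ^ 2 + (Iic m).indicator (fun x => 2 * (a₂ - a₁) * x + (a₁ ^ 2 - a₂ ^ 2)) x := by
    ext x
    by_cases hxm : x ≤ m
    · rw [indicator_of_mem (mem_Iic.2 hxm), min_eq_left (by nlinarith)]; ring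
    · rw [indicator_of_notMem (mt mem_Iic.1 hxm), min_eq_right (by nlinarith), add_zero]
  have hsq : Integrable (fun x => (x - a₂) ^ 2) μ :=
    ((hx2.sub (hx.const_mul (2 * a₂))).add (integrable_const (a₂ ^ 2))).congr
      (ae_of_all _ fun x => by simp only [Pi.add_apply, Pi.sub_apply]; ring)
  have hlin : Integrable (fun x => 2 * (a₂ - a₁) * x) μ := hx.const_mul _
  have haff : Integrable (fun x => 2 * (a₂ - a₁) * x + (a₁ ^ 2 - a₂ ^ 2)) μ :=
    hlin.add (integrable_const _)
  rw [hpt, integral_add hsq (haff.indicator measurableSet_Iic),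
    integral_indicator measurableSet_Iic,
    integral_add hlin.integrableOn (integrable_const _).integrableOn, integral_const_mul,
    setIntegral_const, smul_eq_mul, mul_comm (μ.real _)]

lemma restrict_Iic_P {m : ℝ} (hm : m ≤ 1 / 3) :
    P.restrict (Iic m) = ENNReal.ofReal (3 / 2) • volume.restrict (Icc 0 m) := by
  ext s hs
  have hsm : MeasurableSet (s ∩ Iic m) := hs.inter measurableSet_Iic
  rw [Measure.restrict_apply hs, P_eq_sum, Measure.sum_apply _ hsm, tsum_eq_single 0]
  · have : Iic m ∩ Icc 0 (1 / 3) = Icc 0 m := by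
      ext x
      simp only [mem_inter_iff, mem_Iic, mem_Icc]
      exact ⟨fun h => ⟨h.2.1, h.1⟩, fun h => ⟨h.2, h.1, h.2.trans hm⟩⟩
    rw [Measure.smul_apply, Measure.smul_apply, Measure.restrict_apply hsm,
      Measure.restrict_apply hs,
      zero_add, J_one, inter_assoc, this]
    norm_num
  · intro n hn
    obtain ⟨k, rfl⟩ := Nat.exists_eq_add_one_of_ne_zero hn
    have : Iic m ∩ J (k + 1 + 1) = ∅ := (disjoint_left.2 fun x hx hx' => by
      linarith [(J_succ_succ_subset k hx').1, mem_Iic.1 hx]).inter_eq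
    rw [Measure.smul_apply, Measure.restrict_apply hsm, inter_assoc, this, inter_empty,
      measure_empty, smul_zero]

lemma setIntegral_Iic_P {m : ℝ} (hm : m ≤ 1 / 3) (g : ℝ → ℝ) :
    ∫ x in Iic m, g x ∂P = 3 / 2 * ∫ x in Icc 0 m, g x := by
  rw [restrict_Iic_P hm, integral_smul_measure, ENNReal.toReal_ofReal (by norm_num), smul_eq_mul]

lemma measureReal_Iic_P {m : ℝ} (hm : m ≤ 1 / 3) : P.real (Iic m) = 3 / 2 * max m 0 := by
  have h := setIntegral_Iic_P hm fun _ => 1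
  rw [setIntegral_const, setIntegral_const, Real.volume_real_Icc, sub_zero] at h
  simpa using h

lemma setIntegral_Iic_id_P {m : ℝ} (hm : m ≤ 1 / 3) : ∫ x in Iic m, x ∂P = 3 / 4 * max m 0 ^ 2 := by
  rw [setIntegral_Iic_P hm]
  rcases lt_or_ge m 0 with h | h
  · rw [Icc_eq_empty (not_le.2 h), setIntegral_empty, max_eq_right h.le]; ring
  · rw [setIntegral_Icc_eq_intervalIntegral h, integral_id, max_eq_left h]; ring

lemma setIntegral_sub_const_P (s : Set ℝ) (c : ℝ) :
    ∫ x in s, (x - c) ∂P = ∫ x in s, x ∂P - c * P.real s := by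
  rw [integral_sub integrable_id_P.integrableOn (integrable_const c).integrableOn,
    setIntegral_const, smul_eq_mul, mul_comm]

lemma setIntegral_Iic_add_Ioi_P (m c : ℝ) :
    ∫ x in Iic m, (x - c) ∂P + ∫ x in Ioi m, (x - c) ∂P = 1 / 2 - c := by
  rw [← compl_Iic, integral_add_compl (f := fun x => x - c) measurableSet_Iic
      (integrable_id_P.sub (integrable_const c)),
    integral_sub integrable_id_P (integrable_const c), integral_id_P, integral_const,
    probReal_univ, one_smul]

lemma half_le_measureReal_Iic_P {m : ℝ} (hm : 1 / 3 ≤ m) : 1 / 2 ≤ P.real (Iic m) := by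
  calc (1 : ℝ) / 2 = P.real (Iic (1 / 3)) := by rw [measureReal_Iic_P le_rfl]; norm_num
    _ ≤ P.real (Iic m) := measureReal_mono (Iic_subset_Iic.2 hm)

lemma measureReal_Iic_sub_half_le_P (m : ℝ) : P.real (Iic m) - 1 / 2 ≤ ∫ x in Iic m, x ∂P := by
  have hIoi : ∫ x in Ioi m, (x - 1) ∂P ≤ 0 := by
    refine setIntegral_nonpos_ae measurableSet_Ioi ?_
    filter_upwards [ae_mem_Icc_P] with x hx _ using by linarith [hx.2]
  linarith [setIntegral_Iic_add_Ioi_P m 1, setIntegral_sub_const_P (Iic m) 1]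

lemma setIntegral_Iic_id_le_P {m : ℝ} (hm : 1 / 3 ≤ m) :
    ∫ x in Iic m, x ∂P ≤ P.real (Iic m) / 2 := by
  have hIoi : 0 ≤ ∫ x in Ioi m, (x - 1 / 2) ∂P := by
    refine setIntegral_nonneg_ae measurableSet_Ioi ?_
    filter_upwards [ae_mem_P] with x hx hxm
    rcases hx with hx | hx
    · linarith [hx.2, mem_Ioi.1 hxm]
    · linarith [hx.1]
  linarith [setIntegral_Iic_add_Ioi_P m (1 / 2), setIntegral_sub_const_P (Iic m) (1 / 2)]

lemma two_thirds_measureReal_Iic_sub_le_P {m : ℝ} (hm : 1 / 3 ≤ m) :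
    2 / 3 * P.real (Iic m) - 1 / 4 ≤ ∫ x in Iic m, x ∂P := by
  have hgap : 0 ≤ ∫ x in Ioc (1 / 3) m, (x - 2 / 3) ∂P := by
    refine setIntegral_nonneg_ae measurableSet_Ioc ?_
    filter_upwards [ae_mem_P] with x hx hxm
    rcases hx with hx | hx
    · linarith [hx.2, hxm.1]
    · linarith [hx.1]
  have hint : Integrable (fun x => x - 2 / 3) P := integrable_id_P.sub (integrable_const _)
  have hsplit : ∫ x in Iic m, (x - 2 / 3) ∂P =
      ∫ x in Iic (1 / 3), (x - 2 / 3) ∂P + ∫ x in Ioc (1 / 3) m, (x - 2 / 3) ∂P := by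
    rw [← Iic_union_Ioc_eq_Iic hm]
    exact setIntegral_union (Iic_disjoint_Ioc le_rfl) measurableSet_Ioc hint.integrableOn
      hint.integrableOn
  have hthird := setIntegral_sub_const_P (Iic (1 / 3)) (2 / 3)
  rw [measureReal_Iic_P le_rfl, setIntegral_Iic_id_P le_rfl] at hthird
  norm_num at hthird
  linarith [setIntegral_sub_const_P (Iic m) (2 / 3)]

/-- With Lean's convention `b ^ 2 / 0 = 0` this also covers the degenerate case `c = b = 0`. -/
lemma neg_sq_div_le {b c : ℝ} (a : ℝ) (hc : 0 ≤ c) (hb : c = 0 → b = 0) :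
    -(b ^ 2 / c) ≤ c * a ^ 2 - 2 * b * a := by
  rcases hc.eq_or_lt with rfl | hc
  · simp [hb rfl]
  · have hsq : c * a ^ 2 - 2 * b * a + b ^ 2 / c = (c * a - b) ^ 2 / c := by field_simp; ring
    have : 0 ≤ (c * a - b) ^ 2 / c := by positivity
    linarith

/-- Minimising separately over `a₁` and `a₂`: the optimal centres are the conditional means
`M / p` and `(1/2 - M) / (1 - p)` of the two halves. -/
lemma neg_le_two_means_quadratic {p M : ℝ} (a₁ a₂ : ℝ) (hp0 : 0 ≤ p) (hp1 : p ≤ 1)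
    (h0 : p = 0 → M = 0) (h1 : p = 1 → M = 1 / 2)
    (hbound : M ^ 2 / p + (1 / 2 - M) ^ 2 / (1 - p) ≤ 13 / 36) :
    -(13 / 36) ≤ a₂ ^ 2 - a₂ + (2 * (a₂ - a₁) * M + (a₁ ^ 2 - a₂ ^ 2) * p) := by
  have h₁ := neg_sq_div_le a₁ hp0 h0
  have h₂ := neg_sq_div_le (b := 1 / 2 - M) a₂ (sub_nonneg.2 hp1)
    fun h => by rw [h1 (by linarith)]; ring
  linarith

lemma centroid_bound_of_le_half {p : ℝ} (hp0 : 0 ≤ p) (hp : p ≤ 1 / 2) :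
    (p ^ 2 / 3) ^ 2 / p + (1 / 2 - p ^ 2 / 3) ^ 2 / (1 - p) ≤ 13 / 36 := by
  rcases hp0.eq_or_lt with rfl | hp0
  · norm_num
  have hq : 0 < 1 - p := by linarith
  rw [div_add_div _ _ hp0.ne' hq.ne', div_le_iff₀ (by positivity)]
  nlinarith [mul_pos hp0 hp0, mul_pos (mul_pos hp0 hp0) hp0,
    mul_nonneg (mul_nonneg hp0.le hp0.le) hq.le,
    sq_nonneg (p * (p - 1 / 2))]

lemma centroid_bound_of_half_le {p M : ℝ} (hp : 1 / 2 ≤ p) (hp1 : p ≤ 1)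
    (hM₁ : 2 / 3 * p - 1 / 4 ≤ M) (hM₂ : p - 1 / 2 ≤ M) (hM₃ : M ≤ p / 2) :
    M ^ 2 / p + (1 / 2 - M) ^ 2 / (1 - p) ≤ 13 / 36 := by
  rcases hp1.eq_or_lt with rfl | hp1
  · obtain rfl : M = 1 / 2 := by linarith
    norm_num
  have hq : 0 < 1 - p := by linarith
  rw [div_add_div _ _ (by positivity) hq.ne', div_le_iff₀ (by positivity)]
  rcases le_total p (4 / 5) with hp45 | hp45
  · nlinarith [mul_nonneg (sub_nonneg.2 hM₁)
        (sub_nonneg.2 (show M + (2 / 3 * p - 1 / 4) ≤ p by linarith)),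
      mul_nonneg (sub_nonneg.2 hp) (sub_nonneg.2 hp45)]
  · nlinarith [mul_nonneg (sub_nonneg.2 hM₂) (sub_nonneg.2 (show M + (p - 1 / 2) ≤ p by linarith)),
      mul_nonneg (sub_nonneg.2 hp45) hq.le]

theorem le_integral_min_sq_P {a₁ a₂ : ℝ} (h : a₁ ≤ a₂) :
    7 / 612 ≤ ∫ x, min ((x - a₁) ^ 2) ((x - a₂) ^ 2) ∂P := by
  rw [integral_min_sq_sub_sq integrable_id_P integrable_sq_P h, integral_sq_sub_P]
  set m := (a₁ + a₂) / 2
  set p := P.real (Iic m)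
  set M := ∫ x in Iic m, x ∂P with hM
  have hp0 : 0 ≤ p := measureReal_nonneg
  have hp1 : p ≤ 1 := measureReal_le_one
  suffices -(13 / 36) ≤ a₂ ^ 2 - a₂ + (2 * (a₂ - a₁) * M + (a₁ ^ 2 - a₂ ^ 2) * p) by linarith
  rcases le_total m (1 / 3) with hm | hm
  · have hp_eq : p = 3 / 2 * max m 0 := measureReal_Iic_P hm
    have hM_eq : M = p ^ 2 / 3 := by rw [hM, setIntegral_Iic_id_P hm, hp_eq]; ring
    have hp_half : p ≤ 1 / 2 := by linarith [max_le hm (by norm_num : (0 : ℝ) ≤ 1 / 3)]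
    refine neg_le_two_means_quadratic a₁ a₂ hp0 hp1 (fun h => by rw [hM_eq, h]; ring)
      (fun h => by linarith) ?_
    rw [hM_eq]
    exact centroid_bound_of_le_half hp0 hp_half
  · have hp_half : 1 / 2 ≤ p := half_le_measureReal_Iic_P hm
    have hM₂ : p - 1 / 2 ≤ M := measureReal_Iic_sub_half_le_P m
    have hM₃ : M ≤ p / 2 := setIntegral_Iic_id_le_P hm
    exact neg_le_two_means_quadratic a₁ a₂ hp0 hp1 (fun h => by linarith) (fun h => by linarith)
      (centroid_bound_of_half_le hp_half hp1 (two_thirds_measureReal_Iic_sub_le_P hm) hM₂ hM₃)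

theorem stmt_6 :
    (∫ x, min ((x - 1 / 6) ^ 2) ((x - 5 / 6) ^ 2) ∂P) = 7 / 612 ∧
    ∀ a₁ a₂ : ℝ, 7 / 612 ≤ ∫ x, min ((x - a₁) ^ 2) ((x - a₂) ^ 2) ∂P := by
  refine ⟨integral_min_sq_P_sixths, fun a₁ a₂ => ?_⟩
  rcases le_total a₁ a₂ with h | h
  · exact le_integral_min_sq_P h
  · simpa only [min_comm] using le_integral_min_sq_P h
end

section
/- Fix a positive integer m ≥ 2 and an index i ≥ 1. The function g(t) = (1/t²)·18^(-i) + (1/(m-t)²)·18^(-(i+1)), defined for integers 1 ≤ t ≤ m-1, is minimized at a value t₀ with t₀ ≥ m/2 when m ≥ 3, and at t₀ = 1 when m = 2. In particular, any minimizer t₀ with m ≥ 3 satisfies t₀ > m - t₀. -/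
lemma key_ineq (x : ℝ) (hx : 2 ≤ x) :
    1 / (x+1)^2 + (1/18) * (1 / (x-1)^2) < 1 / x^2 + (1/18) * (1 / x^2) := by
  have h1 : 0 < x - 1 := by linarith
  have h2 : 0 < x := by linarith
  have h3 : 0 < x + 1 := by linarith
  have hd : 1 / x^2 + (1/18) * (1 / x^2) - (1 / (x+1)^2 + (1/18) * (1 / (x-1)^2))
      = (34*x^3 - 57*x^2 + 19) / (18*x^2*(x+1)^2*(x-1)^2) := by
    field_simp
    ring
  have hnum : 0 < 34*x^3 - 57*x^2 + 19 := by nlinarith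
  have hpos : 0 < (34*x^3 - 57*x^2 + 19) / (18*x^2*(x+1)^2*(x-1)^2) := by positivity
  linarith

theorem stmt_10 (m i : ℕ) (hm : 2 ≤ m) (hi : 1 ≤ i)
    (g : ℕ → ℝ)
    (hg : ∀ t, g t = (1 / (t : ℝ) ^ 2) * (1 / 18 ^ i) + (1 / ((m : ℝ) - t) ^ 2) * (1 / 18 ^ (i + 1)))
    (t₀ : ℕ) (ht₀ : t₀ ∈ Finset.Icc 1 (m - 1))
    (hmin : ∀ t ∈ Finset.Icc 1 (m - 1), g t₀ ≤ g t) :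
    (m = 2 → t₀ = 1) ∧ (3 ≤ m → ((m : ℝ) / 2 ≤ t₀ ∧ m - t₀ < t₀)) := by
  simp only [Finset.mem_Icc] at ht₀
  obtain ⟨h1t, htm⟩ := ht₀
  have htm' : t₀ ≤ m - 1 := htm
  have ha : (0:ℝ) < 1 / 18 ^ i := by positivity
  constructor
  · intro h2; omega
  · intro h3
    have key : m < 2 * t₀ := by
      by_contra hc
      push_neg at hc
      rcases lt_or_eq_of_le hc with hlt | heq
      · -- 2*t₀ < m : compare with s = m - t₀
        set s := m - t₀ with hs
        have hsIcc : s ∈ Finset.Icc 1 (m-1) := by simp [Finset.mem_Icc]; omega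
        have h := hmin s hsIcc
        rw [hg, hg] at h
        have hcast : ((s:ℕ):ℝ) = (m:ℝ) - t₀ := by
          rw [hs]; push_cast [Nat.cast_sub (by omega : t₀ ≤ m)]; ring
        rw [hcast] at h
        have hms : (m:ℝ) - ((m:ℝ) - t₀) = t₀ := by ring
        rw [hms] at h
        -- now h : a/x² + b/y² ≤ a/y² + b/x² with x < y
        have hx : (1:ℝ) ≤ t₀ := by exact_mod_cast h1t
        have hxy : (t₀:ℝ) < (m:ℝ) - t₀ := by
          have h' : t₀ + t₀ < m := by omega
          have : (t₀:ℝ) + t₀ < m := by exact_mod_cast h' 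
          linarith
        have hu : 1 / ((m:ℝ) - t₀)^2 < 1 / (t₀:ℝ)^2 := by
          apply one_div_lt_one_div_of_lt (by positivity)
          nlinarith
        have hb : (1:ℝ) / 18 ^ (i+1) < 1 / 18 ^ i := by
          apply one_div_lt_one_div_of_lt (by positivity)
          have : (18:ℝ)^i < 18^(i+1) := by
            apply pow_lt_pow_right₀ (by norm_num); omega
          exact this
        nlinarith [mul_pos (sub_pos.2 hu) (sub_pos.2 hb)]
      · -- m = 2*t₀ : compare with t₀ + 1
        have ht2 : 2 ≤ t₀ := by omega
        have hIcc : t₀ + 1 ∈ Finset.Icc 1 (m-1) := by simp [Finset.mem_Icc]; omega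
        have h := hmin (t₀+1) hIcc
        rw [hg, hg] at h
        have hx : (2:ℝ) ≤ (t₀:ℝ) := by exact_mod_cast ht2
        have hmr : (m:ℝ) = 2 * t₀ := by exact_mod_cast heq.symm
        have hc1 : ((t₀+1 : ℕ):ℝ) = (t₀:ℝ) + 1 := by push_cast; ring
        rw [hc1, hmr] at h
        have e1 : 2 * (t₀:ℝ) - t₀ = t₀ := by ring
        have e2 : 2 * (t₀:ℝ) - ((t₀:ℝ)+1) = (t₀:ℝ) - 1 := by ring
        rw [e1, e2] at h
        have hb : (1:ℝ) / 18 ^ (i+1) = (1/18) * (1 / 18 ^ i) := by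
          rw [pow_succ]; field_simp
        rw [hb] at h
        have := key_ineq (t₀:ℝ) hx
        nlinarith [this, ha]
    constructor
    · have : (m:ℝ) < 2 * t₀ := by exact_mod_cast key
      linarith
    · omega
end
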